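/- arXiv:2505.15064 — 2 statements merged into one kernel-verified Lean document; each statement's English description precedes it below -/
import Mathlib

section
/- Let (X,d) be a metric space and F = {f_1,…,f_r} ⊂ Isom(X) a set of r isometries of X such that d_∞(g,h) < ∞ for all g,h in the semigroup ⟨F⟩ generated by F. Assume: (1) the semigroup ⟨F⟩ is free on the generators f_1,…,f_r (no relations among positive words); and (2) there exist x* ∈ X and c > 0 such that for all u,v ∈ ⟨F⟩, d(u(x*), v(x*)) ≥ c·dist_word(u,v), where dist_word is the combinatorial word distance on the free semigroup. Then for every k and every ε < c/2, N(B(k,F), d_∞, ε) ≥ r^k. -/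
/-!
Distinct words of length `k` have word distance at least `2`, so by coarse coding their images
at `x*` are at least `2c` apart, hence the corresponding maps are `2c`-separated in `d_∞`.
Since `2ε < 2c`, no `ε`-ball contains two of these `r ^ k` maps, so every `ε`-cover of `B(k,F)`
has at least `r ^ k` centres.
-/

open scoped ENNReal NNReal

/-- Uniform (sup) extended distance between two maps. -/
noncomputable def eUnifDist {X Y : Type*} [PseudoEMetricSpace Y] (f g : X → Y) : ℝ≥0∞ :=
  ⨆ x, edist (f x) (g x)

/-- `ε`-covering number of a set `A` with respect to an `ℝ≥0∞`-valued pseudometric `ρ`. -/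
noncomputable def eCovNum {α : Type*} (ρ : α → α → ℝ≥0∞) (A : Set α) (ε : ℝ≥0∞) : ℝ≥0∞ :=
  ⨅ (C : Finset α) (_ : ∀ a ∈ A, ∃ c ∈ C, ρ a c ≤ ε), (C.card : ℝ≥0∞)

/-- Word ball `B(k,F)`. -/
def wordBall {X : Type*} (k : ℕ) (F : Set (X → X)) : Set (X → X) :=
  {g | ∃ l : List (X → X), l.length ≤ k ∧ (∀ f ∈ l, f ∈ F) ∧ g = l.foldr (· ∘ ·) id}

/-- Composition of a word (list of generator indices, applied first-to-last). -/
def listComp {X : Type*} {r : ℕ} (f : Fin r → X → X) (u : List (Fin r)) : X → X :=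
  (u.map f).foldr (· ∘ ·) id

/-- Length of the longest common prefix of two words. -/
def commonPrefixLen {ι : Type*} [DecidableEq ι] : List ι → List ι → ℕ
  | a :: u, b :: v => if a = b then commonPrefixLen u v + 1 else 0
  | _, _ => 0

/-- Combinatorial word distance on the free semigroup on `ι`. -/
def wordDist {ι : Type*} [DecidableEq ι] (u v : List ι) : ℕ :=
  u.length + v.length - 2 * commonPrefixLen u v

lemma commonPrefixLen_lt_length {ι : Type*} [DecidableEq ι] :
    ∀ u v : List ι, u.length = v.length → u ≠ v → commonPrefixLen u v < u.length
  | [], [], _, hne => absurd rfl hne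
  | a :: u, b :: v, hlen, hne => by
    by_cases hab : a = b
    · subst hab
      have := commonPrefixLen_lt_length u v (by simpa using hlen) (fun h => hne (h ▸ rfl))
      simp only [commonPrefixLen, if_true, List.length_cons]
      omega
    · simp [commonPrefixLen, hab]

lemma two_le_wordDist {ι : Type*} [DecidableEq ι] {u v : List ι}
    (hlen : u.length = v.length) (hne : u ≠ v) : 2 ≤ wordDist u v := by
  have := commonPrefixLen_lt_length u v hlen hne
  unfold wordDist
  omega

section UniformDistance

variable {X Y : Type*} [PseudoEMetricSpace Y]

lemma edist_le_eUnifDist (f g : X → Y) (x : X) : edist (f x) (g x) ≤ eUnifDist f g :=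
  le_iSup (fun x => edist (f x) (g x)) x

lemma eUnifDist_comm (f g : X → Y) : eUnifDist f g = eUnifDist g f := by
  simp only [eUnifDist, edist_comm]

lemma eUnifDist_triangle (f g h : X → Y) : eUnifDist f h ≤ eUnifDist f g + eUnifDist g h :=
  iSup_le fun x => (edist_triangle _ (g x) _).trans <|
    add_le_add (edist_le_eUnifDist f g x) (edist_le_eUnifDist g h x)

end UniformDistance

lemma card_le_eCovNum_of_separated {α ι : Type*} [Fintype ι] {ρ : α → α → ℝ≥0∞}
    (hsymm : ∀ a b, ρ a b = ρ b a) (htri : ∀ a b c, ρ a c ≤ ρ a b + ρ b c)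
    {A : Set α} {ε : ℝ≥0∞} (φ : ι → α) (hφA : ∀ i, φ i ∈ A)
    (hsep : Pairwise fun i j => ε + ε < ρ (φ i) (φ j)) :
    (Fintype.card ι : ℝ≥0∞) ≤ eCovNum ρ A ε := by
  refine le_iInf fun C => le_iInf fun hC => ?_
  choose ψ hψC hψε using fun i => hC (φ i) (hφA i)
  have hψ : Function.Injective ψ := by
    intro i j hij
    by_contra hne
    refine (hsep hne).not_ge ((htri _ (ψ i) _).trans (add_le_add (hψε i) ?_))
    rw [hsymm, hij]
    exact hψε j
  have hcard := Fintype.card_le_of_injective (fun i => (⟨ψ i, hψC i⟩ : C))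
    fun i j h => hψ (congrArg Subtype.val h)
  rw [Fintype.card_coe] at hcard
  exact_mod_cast hcard

lemma listComp_mem_wordBall {X : Type*} {r : ℕ} (f : Fin r → X → X) (u : List (Fin r)) :
    listComp f u ∈ wordBall u.length (Set.range f) :=
  ⟨u.map f, (List.length_map f).le, fun _ hg => by
    obtain ⟨i, -, rfl⟩ := List.mem_map.mp hg
    exact Set.mem_range_self i, rfl⟩

lemma ofReal_add_ofReal_lt_ofReal_two_mul {ε c : ℝ} (hc : 0 < c) (hε : ε < c) :
    ENNReal.ofReal ε + ENNReal.ofReal ε < ENNReal.ofReal (2 * c) := by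
  rcases le_or_gt ε 0 with hε0 | hε0
  · rw [ENNReal.ofReal_of_nonpos hε0, add_zero]
    exact ENNReal.ofReal_pos.mpr (by positivity)
  · rw [← ENNReal.ofReal_add hε0.le hε0.le, ENNReal.ofReal_lt_ofReal_iff (by positivity)]
    linarith

lemma ofReal_two_mul_le_eUnifDist_listComp {X : Type*} [MetricSpace X] {r : ℕ}
    {f : Fin r → X → X} {xs : X} {c : ℝ} (hc : 0 ≤ c)
    (hcoarse : ∀ u v : List (Fin r), u ≠ [] → v ≠ [] →
      c * (wordDist u v : ℝ) ≤ dist (listComp f u xs) (listComp f v xs))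
    {u v : List (Fin r)} (hlen : u.length = v.length) (hne : u ≠ v) (hu : u ≠ []) :
    ENNReal.ofReal (2 * c) ≤ eUnifDist (listComp f u) (listComp f v) := by
  have hv : v ≠ [] := by rintro rfl; exact hu (List.length_eq_zero_iff.mp hlen)
  have hwd : (2 : ℝ) ≤ wordDist u v := by exact_mod_cast two_le_wordDist hlen hne
  have hdist : 2 * c ≤ dist (listComp f u xs) (listComp f v xs) :=
    le_trans (by rw [mul_comm]; gcongr) (hcoarse u v hu hv)
  calc ENNReal.ofReal (2 * c) ≤ edist (listComp f u xs) (listComp f v xs) := by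
        rw [edist_dist]; exact ENNReal.ofReal_le_ofReal hdist
    _ ≤ _ := edist_le_eUnifDist _ _ xs

theorem stmt8_general {X : Type*} [MetricSpace X] (r : ℕ)
    (f : Fin r → X → X)
    (xs : X) (c : ℝ) (hc : 0 < c)
    (hcoarse : ∀ u v : List (Fin r), u ≠ [] → v ≠ [] →
      c * (wordDist u v : ℝ) ≤ dist (listComp f u xs) (listComp f v xs)) :
    ∀ (k : ℕ) (ε : ℝ), ε < c / 2 →
      (r : ℝ≥0∞) ^ k ≤ eCovNum eUnifDist (wordBall k (Set.range f)) (ENNReal.ofReal ε) := by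
  intro k ε hε
  have hsep : Pairwise fun w₁ w₂ : Fin k → Fin r => ENNReal.ofReal ε + ENNReal.ofReal ε <
      eUnifDist (listComp f (List.ofFn w₁)) (listComp f (List.ofFn w₂)) := by
    intro w₁ w₂ hne
    have hk : k ≠ 0 := by rintro rfl; exact hne (Subsingleton.elim _ _)
    exact (ofReal_add_ofReal_lt_ofReal_two_mul hc (by linarith)).trans_le <|
      ofReal_two_mul_le_eUnifDist_listComp hc.le hcoarse (by simp)
        (List.ofFn_injective.ne hne) (by simpa using hk)
  have hcover := card_le_eCovNum_of_separated eUnifDist_comm eUnifDist_triangle _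
    (fun w => List.length_ofFn (f := w) ▸ listComp_mem_wordBall f _) hsep
  simpa [Fintype.card_fun] using hcover

/-- **Condition E1' (free isometric semigroup with coarse coding grows exponentially).** -/
theorem stmt8 {X : Type*} [MetricSpace X] (r : ℕ)
    (f : Fin r → X → X) (hiso : ∀ i, Isometry (f i)) (hbij : ∀ i, Function.Bijective (f i))
    (hfin : ∀ u v : List (Fin r), u ≠ [] → v ≠ [] →
      eUnifDist (listComp f u) (listComp f v) < ⊤)
    (hfree : ∀ u v : List (Fin r), u ≠ [] → v ≠ [] →
      listComp f u = listComp f v → u = v)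
    (xs : X) (c : ℝ) (hc : 0 < c)
    (hcoarse : ∀ u v : List (Fin r), u ≠ [] → v ≠ [] →
      c * (wordDist u v : ℝ) ≤ dist (listComp f u xs) (listComp f v xs)) :
    ∀ (k : ℕ) (ε : ℝ), ε < c / 2 →
      (r : ℝ≥0∞) ^ k ≤ eCovNum eUnifDist (wordBall k (Set.range f)) (ENNReal.ofReal ε) :=
  stmt8_general r f xs c hc hcoarse
end

section
/- Let (X,d) be a bounded metric space with diam(X) = D < ∞, let H be a set of 1-Lipschitz continuous functions h : X → ℝ, and let F ⊂ C(X,X) be a set of continuous self-maps with Lip(f) ≤ λ < 1 for every f ∈ F. Then every composition of the form c = h∘u∘v with h ∈ H, u ∈ B(k,F), v ∈ B(ℓ,F) and u a composition of exactly k maps from F satisfies ‖h∘u∘v − h∘u‖_∞ ≤ D·λ^k; consequently, for all k, sup_{c ∈ H∘B(∞,F)} inf_{g ∈ H∘B(k,F)} ‖c − g‖_∞ ≤ D·λ^k, i.e. the approximation error of the depth-k class to the infinitely deep class decays exponentially in k. -/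
open scoped ENNReal NNReal

/-- Sup-norm distance between two real-valued functions. -/
noncomputable def supDist {X : Type*} (f g : X → ℝ) : ℝ := ⨆ x, |f x - g x|

lemma foldr_lip {X : Type*} [MetricSpace X] {lam : ℝ≥0} (l : List (X → X))
    (h : ∀ f ∈ l, LipschitzWith lam f) :
    LipschitzWith (lam ^ l.length) (l.foldr (· ∘ ·) id) := by
  induction l with
  | nil => simpa using LipschitzWith.id
  | cons f t ih =>
      have hf : LipschitzWith lam f := h f List.mem_cons_self
      have ht := ih (fun g hg => h g (List.mem_cons_of_mem _ hg))
      simpa [pow_succ'] using hf.comp ht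

lemma foldr_append {X : Type*} (l₁ l₂ : List (X → X)) :
    (l₁ ++ l₂).foldr (· ∘ ·) id = l₁.foldr (· ∘ ·) id ∘ l₂.foldr (· ∘ ·) id := by
  induction l₁ with
  | nil => rfl
  | cons f t ih => simp [List.foldr_cons, ih]; rfl

lemma supDist_nonneg {X : Type*} (f g : X → ℝ) : 0 ≤ supDist f g :=
  Real.iSup_nonneg fun x => abs_nonneg _

/-- **Contractive teacher–student setting: exponential bias decay in depth (EL regime).** -/
theorem stmt16 {X : Type*} [MetricSpace X] (D : ℝ)
    (hbdd : Bornology.IsBounded (Set.univ : Set X))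
    (hD : Metric.diam (Set.univ : Set X) = D)
    (H : Set (X → ℝ)) (hH : ∀ h ∈ H, Continuous h ∧ LipschitzWith 1 h)
    (F : Set (X → X)) (hFc : ∀ f ∈ F, Continuous f)
    (lam : ℝ≥0) (hlam : lam < 1) (hFlip : ∀ f ∈ F, LipschitzWith lam f)
    (k : ℕ) :
    (∀ h ∈ H, ∀ l : List (X → X), l.length = k → (∀ f ∈ l, f ∈ F) →
        ∀ l' : List (X → X), (∀ f ∈ l', f ∈ F) →
          supDist (h ∘ l.foldr (· ∘ ·) id ∘ l'.foldr (· ∘ ·) id)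
              (h ∘ l.foldr (· ∘ ·) id) ≤ D * (lam : ℝ) ^ k) ∧
      (sSup ((fun c => sInf ((fun g => supDist c g) '' {g : X → ℝ | ∃ h ∈ H, ∃ f ∈ wordBall k F, g = h ∘ f})) '' {c : X → ℝ | ∃ h ∈ H, ∃ f ∈ ⋃ m, wordBall m F, c = h ∘ f})) ≤
        D * (lam : ℝ) ^ k := by
  have hD0 : 0 ≤ D := hD ▸ Metric.diam_nonneg
  have hbound : 0 ≤ D * (lam : ℝ) ^ k :=
    mul_nonneg hD0 (pow_nonneg lam.coe_nonneg _)
  have part1 : ∀ h ∈ H, ∀ l : List (X → X), l.length = k → (∀ f ∈ l, f ∈ F) →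
      ∀ l' : List (X → X), (∀ f ∈ l', f ∈ F) →
        supDist (h ∘ l.foldr (· ∘ ·) id ∘ l'.foldr (· ∘ ·) id)
            (h ∘ l.foldr (· ∘ ·) id) ≤ D * (lam : ℝ) ^ k := by
    intro h hh l hlen hlF l' hl'F
    have hlip : LipschitzWith (lam ^ k) (l.foldr (· ∘ ·) id) := by
      rw [← hlen]; exact foldr_lip l (fun f hf => hFlip f (hlF f hf))
    have hhl : LipschitzWith 1 h := (hH h hh).2
    apply Real.iSup_le _ hbound
    intro x
    set u := l.foldr (· ∘ ·) id
    set v := l'.foldr (· ∘ ·) id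
    calc |h (u (v x)) - h (u x)| = dist (h (u (v x))) (h (u x)) := (Real.dist_eq _ _).symm
      _ ≤ 1 * dist (u (v x)) (u x) := hhl.dist_le_mul _ _
      _ = dist (u (v x)) (u x) := one_mul _
      _ ≤ (lam : ℝ) ^ k * dist (v x) x := by
          simpa [NNReal.coe_pow] using hlip.dist_le_mul (v x) x
      _ ≤ (lam : ℝ) ^ k * D := by
          refine mul_le_mul_of_nonneg_left ?_ (pow_nonneg lam.coe_nonneg _)
          exact hD ▸ Metric.dist_le_diam_of_mem hbdd (Set.mem_univ _) (Set.mem_univ _)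
      _ = D * (lam : ℝ) ^ k := mul_comm _ _
  refine ⟨part1, ?_⟩
  apply Real.sSup_le _ hbound
  rintro _ ⟨c, ⟨h, hh, f, hf, rfl⟩, rfl⟩
  obtain ⟨m, hm⟩ := Set.mem_iUnion.mp hf
  obtain ⟨l0, hlen0, hl0F, rfl⟩ := hm
  -- find g₀ in the depth-k class within D·λ^k of c
  have key : ∃ g₀ ∈ {g : X → ℝ | ∃ h' ∈ H, ∃ f' ∈ wordBall k F, g = h' ∘ f'},
      supDist (h ∘ l0.foldr (· ∘ ·) id) g₀ ≤ D * (lam : ℝ) ^ k := by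
    by_cases hc : l0.length ≤ k
    · refine ⟨h ∘ l0.foldr (· ∘ ·) id, ⟨h, hh, _, ⟨l0, hc, hl0F, rfl⟩, rfl⟩, ?_⟩
      apply Real.iSup_le _ hbound
      intro x; simpa using hbound
    · push_neg at hc
      set l := l0.take k with hl
      set l' := l0.drop k with hl'
      have hlenl : l.length = k := by
        simp [hl, List.length_take, Nat.min_eq_left hc.le]
      have hlF : ∀ f ∈ l, f ∈ F := fun f hf => hl0F f (List.mem_of_mem_take hf)
      have hl'F : ∀ f ∈ l', f ∈ F := fun f hf => hl0F f (List.mem_of_mem_drop hf)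
      have hsplit : l0.foldr (· ∘ ·) id = l.foldr (· ∘ ·) id ∘ l'.foldr (· ∘ ·) id := by
        conv_lhs => rw [← List.take_append_drop k l0]
        exact foldr_append _ _
      refine ⟨h ∘ l.foldr (· ∘ ·) id, ⟨h, hh, _, ⟨l, hlenl.le, hlF, rfl⟩, rfl⟩, ?_⟩
      rw [hsplit]
      exact part1 h hh l hlenl hlF l' hl'F
  obtain ⟨g₀, hg₀, hg₀le⟩ := key
  have hbb : BddBelow (Set.range fun g =>
      ⨅ _ : g ∈ {g : X → ℝ | ∃ h' ∈ H, ∃ f' ∈ wordBall k F, g = h' ∘ f'},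
        supDist (h ∘ l0.foldr (· ∘ ·) id) g) := by
    refine ⟨0, ?_⟩
    rintro y ⟨g, rfl⟩
    exact Real.iInf_nonneg fun _ => supDist_nonneg _ _
  exact le_trans (csInf_le ⟨0, by rintro _ ⟨g, _, rfl⟩; exact supDist_nonneg _ _⟩ ⟨g₀, hg₀, rfl⟩) hg₀le
end
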